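/- arXiv:2409.10152 — 3 statements merged into one kernel-verified Lean document; each statement's English description precedes it below -/
import Mathlib

section
/- If m is a positive integer with 2 | m and 3 ∤ m, then for all n, L_{n+2m} ≡ -L_n (mod L_m). -/
def lucas : ℕ → ℕ
  | 0 => 2
  | 1 => 1
  | n + 2 => lucas (n + 1) + lucas n

open Nat

lemma fibZ (n : ℕ) : (fib (n+2) : ℤ) = fib n + fib (n+1) := by
  exact_mod_cast Nat.fib_add_two

lemma lucas_fib : ∀ n : ℕ, (lucas n : ℤ) = 2 * fib (n+1) - fib n := by
  intro n
  induction n using Nat.twoStepInduction with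
  | zero => simp [lucas]
  | one => simp [lucas]
  | more n ih1 ih2 =>
    have h : lucas (n+2) = lucas (n+1) + lucas n := rfl
    have hf : (fib (n+2) : ℤ) = fib n + fib (n+1) := fibZ n
    have hf3 : (fib (n+3) : ℤ) = fib (n+1) + fib (n+2) := fibZ (n+1)
    push_cast [h]
    rw [show n+2+1 = n+3 from rfl, hf3, hf]
    linarith

lemma cassini : ∀ n : ℕ, (fib (n+1) : ℤ)^2 - fib (n+2) * fib n = (-1)^n := by
  intro n
  induction n with
  | zero => simp
  | succ n ih =>
    have hg2 : (fib (n+2) : ℤ) = fib n + fib (n+1) := fibZ n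
    have hg3 : (fib (n+3) : ℤ) = fib (n+1) + fib (n+2) := fibZ (n+1)
    rw [show n+1+1 = n+2 from rfl, show n+1+2 = n+3 from rfl]
    linear_combination (-1)*ih - (fib (n+1) : ℤ)*hg3 + (fib (n+2) : ℤ)*hg2

lemma lucas_dvd_fib_two_mul (m : ℕ) : (lucas m : ℤ) ∣ (fib (2*m) : ℤ) := by
  have h := Nat.fib_two_mul m
  have hle : fib m ≤ 2 * fib (m+1) := le_trans (Nat.fib_le_fib_succ) (by omega)
  refine ⟨fib m, ?_⟩
  rw [lucas_fib]
  push_cast [h, hle]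
  ring

lemma lucas_dvd_fib_sq (k : ℕ) (hk : 0 < k) :
    (lucas (2*k) : ℤ) ∣ (fib (2*(2*k)+1) : ℤ) + 1 := by
  obtain ⟨j, hj⟩ : ∃ j, 2*k = 2*j + 2 := ⟨k - 1, by omega⟩
  have hc := cassini (2*j+1)
  have hneg : ((-1 : ℤ))^(2*j+1) = -1 := Odd.neg_one_pow ⟨j, by ring⟩
  rw [hneg] at hc
  have h1 : (fib (2*(2*k)+1) : ℤ) = fib (2*k+1)^2 + fib (2*k)^2 := by
    exact_mod_cast Nat.fib_two_mul_add_one (2*k)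
  have hL : (lucas (2*k) : ℤ) = fib (2*j+3) + fib (2*j+1) := by
    rw [lucas_fib, hj]
    have hf : (fib (2*j+3) : ℤ) = fib (2*j+1) + fib (2*j+2) := fibZ (2*j+1)
    rw [show 2*j+2+1 = 2*j+3 from rfl]
    linarith
  refine ⟨fib (2*j+3), ?_⟩
  rw [h1, hL, hj, show 2*j+2+1 = 2*j+3 from rfl]
  nlinarith [hc]

theorem stmt5 (m : ℕ) (hm : 0 < m) (h2 : 2 ∣ m) (h3 : ¬ 3 ∣ m) (n : ℕ) :
    (lucas (n + 2 * m) : ℤ) ≡ -(lucas n : ℤ) [ZMOD (lucas m : ℤ)] := by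
  obtain ⟨k, rfl⟩ := h2
  have hk : 0 < k := by omega
  set M := 2 * k with hM
  rw [Int.modEq_iff_dvd]
  have h0 : (fib (n + 2*M + 2) : ℤ) = fib (n + 2*M) + fib (n + 2*M + 1) := fibZ (n + 2*M)
  have h1 : (fib (n + 2*M + 1) : ℤ) = fib (2*M) * fib n + fib (2*M + 1) * fib (n+1) := by
    rw [show n + 2*M + 1 = 2*M + n + 1 by ring]
    exact_mod_cast Nat.fib_add (2*M) n
  have h2' : (fib (n + 2*M + 2) : ℤ) = fib (2*M) * fib (n+1) + fib (2*M + 1) * fib (n+2) := by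
    rw [show n + 2*M + 2 = 2*M + (n+1) + 1 by ring]
    exact_mod_cast Nat.fib_add (2*M) (n+1)
  have h3' : (fib (n+2) : ℤ) = fib n + fib (n+1) := fibZ n
  obtain ⟨a, ha⟩ := lucas_dvd_fib_two_mul M
  obtain ⟨b, hb⟩ := lucas_dvd_fib_sq k hk
  rw [← hM] at hb
  refine ⟨-(a*(3*(fib n : ℤ) - fib (n+1)) + b*(2*(fib (n+1) : ℤ) - fib n)), ?_⟩
  rw [lucas_fib n, lucas_fib (n + 2*M)]
  linear_combination (-1)*h0 + (-3)*h1 + h2' + (fib (2*M+1) : ℤ)*h3'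
    - (3*(fib n : ℤ) - fib (n+1))*ha - (2*(fib (n+1) : ℤ) - fib n)*hb
end

section
/- For every natural number α ≥ 1, the Fibonacci numbers satisfy F_{5α} = 5·F_α·(5F_α^4 + 5(-1)^α F_α^2 + 1). -/
private lemma fibz_two_mul (m : ℕ) :
    (Nat.fib (2 * m) : ℤ) = 2 * Nat.fib m * Nat.fib (m + 1) - (Nat.fib m : ℤ) ^ 2 := by
  have h := Nat.fib_two_mul m
  have hle : Nat.fib m ≤ 2 * Nat.fib (m + 1) :=
    le_trans (Nat.fib_le_fib_succ) (by omega)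
  zify [hle] at h
  rw [h]; ring

private lemma fibz_cassini (m : ℕ) :
    (Nat.fib (m + 1) : ℤ) ^ 2 - Nat.fib (m + 1) * Nat.fib m - (Nat.fib m : ℤ) ^ 2
      = (-1) ^ m := by
  induction m with
  | zero => simp
  | succ p ih =>
    have h : (Nat.fib (p + 2) : ℤ) = Nat.fib p + Nat.fib (p + 1) := by
      push_cast [Nat.fib_add_two]; ring
    rw [h, pow_succ]
    linear_combination -ih

theorem stmt9 (α : ℕ) (hα : 1 ≤ α) :
    (Nat.fib (5 * α) : ℤ) =
      5 * Nat.fib α * (5 * (Nat.fib α : ℤ) ^ 4 + 5 * (-1) ^ α * (Nat.fib α : ℤ) ^ 2 + 1) := by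
  obtain ⟨k, rfl⟩ : ∃ k, α = k + 1 := ⟨α - 1, by omega⟩
  have h5 : (Nat.fib (5 * (k + 1)) : ℤ)
      = Nat.fib (4 * (k + 1)) * Nat.fib k + Nat.fib (4 * (k + 1) + 1) * Nat.fib (k + 1) := by
    have h := Nat.fib_add (4 * (k + 1)) k
    rw [show 4 * (k + 1) + k + 1 = 5 * (k + 1) by ring] at h
    exact_mod_cast h
  have hA : (Nat.fib (4 * (k + 1)) : ℤ)
      = 2 * Nat.fib (2 * (k + 1)) * Nat.fib (2 * (k + 1) + 1)
        - (Nat.fib (2 * (k + 1)) : ℤ) ^ 2 := by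
    rw [show 4 * (k + 1) = 2 * (2 * (k + 1)) by ring, fibz_two_mul]
  have hB : (Nat.fib (4 * (k + 1) + 1) : ℤ)
      = (Nat.fib (2 * (k + 1) + 1) : ℤ) ^ 2 + (Nat.fib (2 * (k + 1)) : ℤ) ^ 2 := by
    have h := Nat.fib_two_mul_add_one (2 * (k + 1))
    rw [show 2 * (2 * (k + 1)) + 1 = 4 * (k + 1) + 1 by ring] at h
    exact_mod_cast h
  have h2 : (Nat.fib (2 * (k + 1)) : ℤ)
      = 2 * Nat.fib (k + 1) * Nat.fib (k + 2) - (Nat.fib (k + 1) : ℤ) ^ 2 :=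
    fibz_two_mul (k + 1)
  have h2' : (Nat.fib (2 * (k + 1) + 1) : ℤ)
      = (Nat.fib (k + 2) : ℤ) ^ 2 + (Nat.fib (k + 1) : ℤ) ^ 2 := by
    exact_mod_cast Nat.fib_two_mul_add_one (k + 1)
  have hk : (Nat.fib k : ℤ) = Nat.fib (k + 2) - Nat.fib (k + 1) := by
    push_cast [Nat.fib_add_two]; ring
  have hc : (Nat.fib (k + 2) : ℤ) ^ 2 - Nat.fib (k + 2) * Nat.fib (k + 1)
      - (Nat.fib (k + 1) : ℤ) ^ 2 = (-1) ^ (k + 1) := fibz_cassini (k + 1)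
  have he : ((-1 : ℤ) ^ (k + 1)) ^ 2 = 1 := by
    rw [← pow_mul, mul_comm, pow_mul]; norm_num
  set a : ℤ := (Nat.fib (k + 1) : ℤ)
  set b : ℤ := (Nat.fib (k + 2) : ℤ)
  rw [h5, hA, hB, h2, h2', hk]
  linear_combination (5 * a * (-1 : ℤ) ^ (k + 1) + 5 * a * b ^ 2 - 5 * a ^ 2 * b
    + 20 * a ^ 3) * hc + 5 * a * he
end

section
/- The Diophantine equation L_n + L_{n+1} = x^2 in natural numbers n ≥ 1 and x has the unique solution (n, x) = (1, 2). -/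
noncomputable def Lz (n : ℕ) : ℤ := (lucas n : ℤ)
lemma lucas_add_two (n : ℕ) : lucas (n+2) = lucas (n+1) + lucas n := rfl
lemma Lz_add_two (n : ℕ) : Lz (n + 2) = Lz (n + 1) + Lz n := by simp [Lz, lucas_add_two]
lemma Lz0 : Lz 0 = 2 := rfl
lemma Lz1 : Lz 1 = 1 := rfl
lemma Lz2 : Lz 2 = 3 := rfl
lemma Lz3 : Lz 3 = 4 := rfl
lemma Lcat : ∀ m, Lz m * Lz (m+2) - Lz (m+1)^2 = 5 * (-1)^m := by
  intro m
  induction m with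
  | zero => rw [Lz0, Lz1, Lz2]; norm_num
  | succ k ih =>
    rw [Lz_add_two (k+1)]
    rw [Lz_add_two k] at *
    linear_combination (-1) * ih

lemma LAB : ∀ m, Lz (2*m) = Lz m ^ 2 - 2 * (-1)^m ∧ Lz (2*m+1) = Lz m * Lz (m+1) - (-1)^m := by
  intro m
  induction m with
  | zero => rw [show 2*0 = 0 by rfl, Lz0, Lz1]; norm_num
  | succ k ih =>
    obtain ⟨ihA, ihB⟩ := ih
    have hC := Lcat k
    have e1 : 2*(k+1) = (2*k) + 2 := by ring
    have e2 : 2*(k+1)+1 = (2*k+1) + 2 := by ring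
    rw [e1, show 2*k+2+1 = (2*k+1)+2 from rfl, Lz_add_two (2*k+1), show 2*k+1+1 = 2*k+2 from rfl, Lz_add_two (2*k)]
    rw [Lz_add_two k] at hC
    rw [show k+1+1 = k+2 from rfl, Lz_add_two k, ihA, ihB]
    constructor
    · linear_combination hC
    · linear_combination hC

lemma Ldvd (m : ℕ) : ∀ k, Lz m ∣ Lz (k + 2*m) + (-1)^m * Lz k := by
  intro k
  induction k using Nat.twoStepInduction with
  | zero =>
    obtain ⟨hA, -⟩ := LAB m
    exact ⟨Lz m, by rw [show 0 + 2*m = 2*m from by omega, hA, Lz0]; ring⟩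
  | one =>
    obtain ⟨-, hB⟩ := LAB m
    exact ⟨Lz (m+1), by rw [show 1 + 2*m = 2*m+1 from by omega, hB, Lz1]; ring⟩
  | more k ih1 ih2 =>
    obtain ⟨c1, e1⟩ := ih1
    obtain ⟨c2, e2⟩ := ih2
    refine ⟨c1 + c2, ?_⟩
    rw [show k + 1 + 2*m = (k + 2*m) + 1 from by omega] at e2
    rw [show k + 2 + 2*m = (k + 2*m) + 2 from by omega, Lz_add_two (k + 2*m), Lz_add_two k]
    linear_combination e1 + e2

lemma LdvdE (m : ℕ) (hm : m % 2 = 0) (k : ℕ) : ∀ t, Lz m ∣ Lz (k + 2*m*t) - (-1)^t * Lz k := by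
  have hneg : (-1 : ℤ)^m = 1 := Even.neg_one_pow (Nat.even_iff.mpr hm)
  intro t
  induction t with
  | zero => simp
  | succ s ih =>
    obtain ⟨c1, e1⟩ := ih
    obtain ⟨c2, e2⟩ := Ldvd m (k + 2*m*s)
    rw [hneg] at e2
    refine ⟨c2 - c1, ?_⟩
    rw [show k + 2*m*(s+1) = (k + 2*m*s) + 2*m from by ring]
    linear_combination e2 - e1

lemma lucas_pos : ∀ n, 0 < lucas n := by
  have h : ∀ n, 0 < lucas n ∧ 0 < lucas (n+1) := by
    intro n
    induction n with
    | zero => exact ⟨by norm_num [lucas], by norm_num [lucas]⟩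
    | succ k ih => exact ⟨ih.2, by rw [lucas_add_two]; omega⟩
  exact fun n => (h n).1

lemma lucas_ge_three : ∀ n, 2 ≤ n → 3 ≤ lucas n := by
  intro n hn
  induction n with
  | zero => omega
  | succ k ih =>
    rcases Nat.lt_or_ge k 2 with hk | hk
    · interval_cases k
      · omega
      · norm_num [lucas_add_two, lucas]
    · have h1 := lucas_pos k
      have h2 : k + 1 = (k - 1) + 2 := by omega
      rw [h2, lucas_add_two]
      have := ih (by omega)
      have h3 : k - 1 + 1 = k := by omega
      rw [h3]
      omega

lemma Lpow2mod4 : ∀ s, 1 ≤ s → lucas (2^s) % 4 = 3 := by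
  intro s hs
  induction s with
  | zero => omega
  | succ k ih =>
    rcases Nat.eq_or_lt_of_le hs with h | h
    · norm_num [← h, lucas_add_two, lucas]
    · have hk : 1 ≤ k := by omega
      have ihk := ih hk
      obtain ⟨q, hq⟩ : ∃ q, lucas (2^k) = 4*q + 3 := ⟨lucas (2^k) / 4, by omega⟩
      have heven : (-1 : ℤ)^(2^k) = 1 := Even.neg_one_pow (by
        exact (Nat.even_pow' (by omega)).mpr even_two)
      obtain ⟨hA, -⟩ := LAB (2^k)
      rw [heven] at hA
      have h2 : (2 : ℕ)^(k+1) = 2 * 2^k := by rw [pow_succ]; ring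
      have hz : (lucas (2^(k+1)) : ℤ) = 4*(4*q^2 + 6*q + 1) + 3 := by
        have := hA
        rw [← h2] at this
        rw [show Lz (2^(k+1)) = (lucas (2^(k+1)) : ℤ) from rfl] at this
        rw [this, show Lz (2^k) = (lucas (2^k) : ℤ) from rfl, hq]
        push_cast
        ring
      have hn : lucas (2^(k+1)) = 4*(4*q^2 + 6*q + 1) + 3 := by exact_mod_cast hz
      omega

lemma exists_prime_4k3 : ∀ N : ℕ, N % 4 = 3 → ∃ p, p.Prime ∧ p ∣ N ∧ p % 4 = 3 := by
  intro N
  induction N using Nat.strong_induction_on with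
  | _ N ih =>
    intro hN
    have hN1 : N ≠ 1 := by omega
    obtain ⟨p, hp, hpd⟩ := Nat.exists_prime_and_dvd hN1
    have hp2 : p ≠ 2 := by
      rintro rfl
      obtain ⟨c, rfl⟩ := hpd
      omega
    have hpodd : p % 2 = 1 := Nat.Prime.eq_two_or_odd hp |>.resolve_left hp2
    rcases Nat.lt_or_ge (p % 4) 3 with hlt | hge
    · -- p % 4 = 1
      have hp4 : p % 4 = 1 := by omega
      obtain ⟨M, hM⟩ := hpd
      have hp1 : 1 < p := hp.one_lt
      have hM0 : M ≠ 0 := by rintro rfl; omega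
      have hMlt : M < N := by
        have : M * 1 < M * p := Nat.mul_lt_mul_of_le_of_lt (le_refl M) hp1 (by omega)
        nlinarith [hM]
      have hM4 : M % 4 = 3 := by
        have := Nat.mul_mod p M 4
        rw [hp4] at this
        omega
      obtain ⟨q, hq, hqd, hq4⟩ := ih M hMlt hM4
      exact ⟨q, hq, hqd.trans ⟨p, by rw [hM]; ring⟩, hq4⟩
    · have hp4 : p % 4 = 3 := by omega
      exact ⟨p, hp, hpd, hp4⟩

lemma no_sq_neg (p : ℕ) (hp : p.Prime) (h3 : p % 4 = 3) (x c : ℤ)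
    (hc : ¬ (p : ℤ) ∣ c) (h : (p : ℤ) ∣ x^2 + c^2) : False := by
  haveI : Fact p.Prime := ⟨hp⟩
  have hc0 : (c : ZMod p) ≠ 0 := by
    rwa [Ne, ZMod.intCast_zmod_eq_zero_iff_dvd]
  have h0 : ((x : ZMod p))^2 + (c : ZMod p)^2 = 0 := by
    have := (ZMod.intCast_zmod_eq_zero_iff_dvd (x^2 + c^2) p).mpr h
    push_cast at this
    exact this
  have hsq : IsSquare (-1 : ZMod p) := by
    refine ⟨(x : ZMod p) * (c : ZMod p)⁻¹, ?_⟩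
    have hx2 : ((x : ZMod p))^2 = -((c : ZMod p))^2 := by linear_combination h0
    field_simp
    linear_combination -hx2
  have := (ZMod.exists_sq_eq_neg_one_iff (p := p)).mp hsq
  exact this (by omega)

lemma sq_gap (a b : ℕ) (ha : 1 ≤ a) : a^2 + 2 ≠ b^2 := by
  intro h
  have hab : a < b := by nlinarith
  have : a + 1 ≤ b := hab
  nlinarith

lemma LzN (N : ℕ) : Lz N = (lucas N : ℤ) := rfl

lemma odd_case (N x a b : ℕ) (j c : ℕ) (hj : (j = 1 ∧ c = 1) ∨ (j = 3 ∧ c = 2))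
    (hb : b % 2 = 1) (ha : 2 ≤ a) (hNe : N = j + 2^a * b)
    (h : (lucas N : ℤ) = (x : ℤ)^2) : False := by
  set m := 2^(a-1) with hm
  have hm2 : m % 2 = 0 := by
    have : (2:ℕ) ∣ 2^(a-1) := dvd_pow_self 2 (by omega)
    omega
  have h2m : 2 * m = 2^a := by
    rw [hm, ← pow_succ']
    congr 1
    omega
  have hNe2 : N = j + 2*m*b := by rw [h2m]; exact hNe
  have hd := LdvdE m hm2 j b
  rw [← hNe2, Odd.neg_one_pow (Nat.odd_iff.mpr hb)] at hd
  have hdd : Lz m ∣ (x:ℤ)^2 + (c:ℤ)^2 := by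
    rcases hj with ⟨rfl, rfl⟩ | ⟨rfl, rfl⟩
    · have e : Lz N - (-1) * Lz 1 = (x:ℤ)^2 + ((1:ℕ):ℤ)^2 := by
        rw [LzN, h, Lz1]; push_cast; ring
      rwa [e] at hd
    · have e : Lz N - (-1) * Lz 3 = (x:ℤ)^2 + ((2:ℕ):ℤ)^2 := by
        rw [LzN, h, Lz3]; push_cast; ring
      rwa [e] at hd
  have hmod : lucas m % 4 = 3 := Lpow2mod4 (a-1) (by omega)
  obtain ⟨p, hp, hpd, hp4⟩ := exists_prime_4k3 (lucas m) hmod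
  have hpdz : (p : ℤ) ∣ Lz m := by
    rw [LzN]
    exact_mod_cast Int.natCast_dvd_natCast.mpr hpd
  refine no_sq_neg p hp hp4 x c ?_ (hpdz.trans hdd)
  intro hcd
  have hcd' : p ∣ c := by exact_mod_cast hcd
  have : c = 1 ∨ c = 2 := by rcases hj with ⟨-, rfl⟩ | ⟨-, rfl⟩ <;> omega
  have hple : p ≤ 2 := Nat.le_of_dvd (by omega) hcd' |>.trans (by omega)
  omega

lemma cohn (N x : ℕ) (hN : 3 ≤ N) (h : lucas N = x^2) : N = 3 := by
  have hz : (lucas N : ℤ) = (x : ℤ)^2 := by exact_mod_cast congrArg (Nat.cast : ℕ → ℤ) h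
  rcases Nat.even_or_odd N with he | ho
  · -- N even: impossible
    exfalso
    obtain ⟨m, hm⟩ := he
    have hm' : N = 2 * m := by omega
    have hm2 : 2 ≤ m := by omega
    obtain ⟨hA, -⟩ := LAB m
    rw [← hm'] at hA
    rw [LzN, hz] at hA
    have hl3 : 3 ≤ lucas m := lucas_ge_three m hm2
    rcases Nat.even_or_odd m with hme | hmo
    · rw [Even.neg_one_pow hme] at hA
      have hnat : x^2 + 2 = (lucas m)^2 := by
        have : (x:ℤ)^2 + 2 = ((lucas m : ℤ))^2 := by rw [LzN] at hA; linarith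
        exact_mod_cast this
      have hx1 : 1 ≤ x := by nlinarith
      exact sq_gap x (lucas m) hx1 hnat
    · rw [Odd.neg_one_pow hmo] at hA
      have hnat : (lucas m)^2 + 2 = x^2 := by
        have : ((lucas m : ℤ))^2 + 2 = (x:ℤ)^2 := by rw [LzN] at hA; linarith
        exact_mod_cast this
      exact sq_gap (lucas m) x (by omega) hnat
  · have ho' : N % 2 = 1 := Nat.odd_iff.mp ho
    rcases Nat.lt_or_ge (N % 4) 2 with h4 | h4
    · -- N % 4 = 1, N ≥ 5
      exfalso
      have h41 : N % 4 = 1 := by omega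
      have hN5 : 5 ≤ N := by omega
      obtain ⟨a, b, hob, hab⟩ := Nat.exists_eq_two_pow_mul_odd (n := N - 1) (by omega)
      have hb2 : b % 2 = 1 := Nat.odd_iff.mp hob
      have ha2 : 2 ≤ a := by
        rcases a with _ | _ | a
        · simp at hab; omega
        · rw [pow_one] at hab; omega
        · omega
      exact odd_case N x a b 1 1 (Or.inl ⟨rfl, rfl⟩) hb2 ha2 (by omega) hz
    · have h43 : N % 4 = 3 := by omega
      rcases Nat.eq_or_lt_of_le hN with h3 | h3
      · omega
      · exfalso
        have hN7 : 7 ≤ N := by omega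
        obtain ⟨a, b, hob, hab⟩ := Nat.exists_eq_two_pow_mul_odd (n := N - 3) (by omega)
        have hb2 : b % 2 = 1 := Nat.odd_iff.mp hob
        have ha2 : 2 ≤ a := by
          rcases a with _ | _ | a
          · simp at hab; omega
          · rw [pow_one] at hab; omega
          · omega
        exact odd_case N x a b 3 2 (Or.inr ⟨rfl, rfl⟩) hb2 ha2 (by omega) hz

theorem stmt17 (n x : ℕ) (hn : 1 ≤ n) (h : lucas n + lucas (n + 1) = x ^ 2) :
    n = 1 ∧ x = 2 := by
  have hL : lucas (n + 2) = x ^ 2 := by rw [lucas_add_two]; omega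
  have hn3 : n + 2 = 3 := cohn (n + 2) x (by omega) hL
  have hn1 : n = 1 := by omega
  subst hn1
  have e1 : lucas 1 = 1 := rfl
  have e2 : lucas (1 + 1) = 3 := rfl
  have hx : x ^ 2 = 4 := by omega
  constructor
  · rfl
  · nlinarith
end
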